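/- arXiv:2501.01621 — 2 statements merged into one kernel-verified Lean document; each statement's English description precedes it below -/
import Mathlib

section
/- Let J ∈ R^{N×N} be invertible with σ = σ_min(J) > 0. Suppose J̃ = Σ_{c∈C} P_c J̃_c P_cᵀ and J = Σ_{c∈C} P_c J_c P_cᵀ where for each c, P_c ∈ R^{N×N_c} and ‖J_c − J̃_c‖_max ≤ δ_c with Σ_c N_c δ_c < σ, and each P_c has operator norm at most 1. Then ‖I − J^{-1} J̃‖₂ ≤ (Σ_c N_c δ_c)/σ < 1. -/
open Matrix

noncomputable def enorm {n : ℕ} (v : Fin n → ℝ) : ℝ := Real.sqrt (∑ i, (v i)^2)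

noncomputable def supNorm {n : ℕ} (v : Fin n → ℝ) : ℝ := ⨆ i, |v i|

noncomputable def opNorm {m n : ℕ} (A : Matrix (Fin m) (Fin n) ℝ) : ℝ :=
  ⨆ v : {v : Fin n → ℝ // v ≠ 0}, _root_.enorm (A.mulVec v.1) / _root_.enorm v.1

noncomputable def maxNorm {m n : ℕ} (A : Matrix (Fin m) (Fin n) ℝ) : ℝ :=
  ⨆ i, ⨆ j, |A i j|

noncomputable def sigmaMin {n : ℕ} (A : Matrix (Fin n) (Fin n) ℝ) : ℝ :=
  ⨅ v : {v : Fin n → ℝ // v ≠ 0}, _root_.enorm (A.mulVec v.1) / _root_.enorm v.1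

/-! Since `1 - J⁻¹ J̃ = J⁻¹ (J - J̃)`, the spectral norm of the left side is at most
`‖J⁻¹‖ ‖J - J̃‖ ≤ σ⁻¹ ‖J - J̃‖`. Each summand of `J - J̃ = ∑ P_c (J_c - J̃_c) P_cᵀ` has norm at most
`‖J_c - J̃_c‖` because `‖P_cᵀ‖ = ‖P_c‖ ≤ 1`, and by Cauchy–Schwarz on the rows an `n × n` matrix
with entries bounded by `δ` has spectral norm at most `n δ`. -/

open scoped Matrix.Norms.L2Operator
open WithLp (toLp)

namespace Matrix

variable {m n : Type*} [Fintype m] [Fintype n] [DecidableEq n]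

theorem l2_opNorm_le_of_mulVec_le {A : Matrix m n ℝ} {K : ℝ} (hK : 0 ≤ K)
    (h : ∀ v : n → ℝ, ‖toLp 2 (A *ᵥ v)‖ ≤ K * ‖toLp 2 v‖) : ‖A‖ ≤ K := by
  rw [l2_opNorm_def]
  exact ContinuousLinearMap.opNorm_le_bound _ hK fun x => h x.ofLp

theorem l2_opNorm_toLp_mulVec_le (A : Matrix m n ℝ) (v : n → ℝ) :
    ‖toLp 2 (A *ᵥ v)‖ ≤ ‖A‖ * ‖toLp 2 v‖ :=
  A.l2_opNorm_mulVec (toLp 2 v)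

theorem l2_opNorm_le_sqrt_card_mul_of_abs_le {A : Matrix m n ℝ} {δ : ℝ} (hδ : 0 ≤ δ)
    (h : ∀ i j, |A i j| ≤ δ) : ‖A‖ ≤ √(Fintype.card m * Fintype.card n) * δ := by
  refine l2_opNorm_le_of_mulVec_le (by positivity) fun v => ?_
  have hrow : ∀ i, (A *ᵥ v) i ^ 2 ≤ (Fintype.card n * δ ^ 2) * ∑ j, v j ^ 2 := fun i =>
    calc (A *ᵥ v) i ^ 2 ≤ (∑ j, A i j ^ 2) * ∑ j, v j ^ 2 :=
          Finset.sum_mul_sq_le_sq_mul_sq _ _ _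
      _ ≤ (∑ _j : n, δ ^ 2) * ∑ j, v j ^ 2 := by
          refine mul_le_mul_of_nonneg_right (Finset.sum_le_sum fun j _ => ?_) (by positivity)
          simpa only [sq_abs] using pow_le_pow_left₀ (abs_nonneg _) (h i j) 2
      _ = (Fintype.card n * δ ^ 2) * ∑ j, v j ^ 2 := by simp
  rw [← sq_le_sq₀ (norm_nonneg _) (by positivity), EuclideanSpace.real_norm_sq_eq, mul_pow,
    mul_pow, EuclideanSpace.real_norm_sq_eq, Real.sq_sqrt (by positivity)]
  calc ∑ i, (A *ᵥ v) i ^ 2 ≤ ∑ _i : m, (Fintype.card n * δ ^ 2) * ∑ j, v j ^ 2 :=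
        Finset.sum_le_sum fun i _ => hrow i
    _ = _ := by simp only [Finset.sum_const, Finset.card_univ, nsmul_eq_mul]; ring

theorem l2_opNorm_transpose [DecidableEq m] (A : Matrix m n ℝ) : ‖Aᵀ‖ = ‖A‖ := by
  rw [← conjTranspose_eq_transpose_of_trivial, l2_opNorm_conjTranspose]

theorem l2_opNorm_mul_mul_transpose_le [DecidableEq m] {k : Type*} [Fintype k] [DecidableEq k]
    (P : Matrix m k ℝ) (A : Matrix k k ℝ) (hP : ‖P‖ ≤ 1) : ‖P * A * Pᵀ‖ ≤ ‖A‖ :=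
  calc ‖P * A * Pᵀ‖ ≤ ‖P‖ * ‖A‖ * ‖Pᵀ‖ :=
        (l2_opNorm_mul _ _).trans (by gcongr; exact l2_opNorm_mul _ _)
    _ ≤ 1 * ‖A‖ * 1 := by rw [l2_opNorm_transpose]; gcongr
    _ = ‖A‖ := by ring

end Matrix

section

variable {m n : ℕ}

theorem enorm_eq_norm_toLp (v : Fin n → ℝ) : _root_.enorm v = ‖toLp 2 v‖ := by
  simp [_root_.enorm, EuclideanSpace.norm_eq]

theorem enorm_mulVec_div_enorm_eq {A : Matrix (Fin m) (Fin n) ℝ}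
    (v : {v : Fin n → ℝ // v ≠ 0}) :
    _root_.enorm (A *ᵥ v.1) / _root_.enorm v.1 = ‖toLp 2 (A *ᵥ v.1)‖ / ‖toLp 2 v.1‖ := by
  rw [enorm_eq_norm_toLp, enorm_eq_norm_toLp]

theorem opNorm_eq_l2_opNorm (A : Matrix (Fin m) (Fin n) ℝ) : opNorm A = ‖A‖ := by
  have hratio (v : {v : Fin n → ℝ // v ≠ 0}) : ‖toLp 2 (A *ᵥ v.1)‖ / ‖toLp 2 v.1‖ ≤ ‖A‖ :=
    div_le_of_le_mul₀ (norm_nonneg _) (norm_nonneg _) (A.l2_opNorm_toLp_mulVec_le _)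
  simp only [opNorm, enorm_mulVec_div_enorm_eq]
  refine le_antisymm (Real.iSup_le hratio (norm_nonneg _)) ?_
  refine l2_opNorm_le_of_mulVec_le (Real.iSup_nonneg fun v => by positivity) fun v => ?_
  rcases eq_or_ne v 0 with rfl | hv
  · simp
  rw [← div_le_iff₀ (by simpa using hv)]
  exact le_ciSup (f := fun v : {v : Fin n → ℝ // v ≠ 0} => ‖toLp 2 (A *ᵥ v.1)‖ / ‖toLp 2 v.1‖)
    ⟨‖A‖, Set.forall_mem_range.mpr hratio⟩ ⟨v, hv⟩

theorem sigmaMin_mul_norm_le (J : Matrix (Fin n) (Fin n) ℝ) (v : Fin n → ℝ) :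
    sigmaMin J * ‖toLp 2 v‖ ≤ ‖toLp 2 (J *ᵥ v)‖ := by
  rcases eq_or_ne v 0 with rfl | hv
  · simp
  rw [← le_div_iff₀ (by simpa using hv)]
  simp only [sigmaMin, enorm_mulVec_div_enorm_eq]
  exact ciInf_le (f := fun v : {v : Fin n → ℝ // v ≠ 0} => ‖toLp 2 (J *ᵥ v.1)‖ / ‖toLp 2 v.1‖)
    ⟨0, Set.forall_mem_range.mpr fun v => by positivity⟩ ⟨v, hv⟩

theorem l2_opNorm_inv_le {J : Matrix (Fin n) (Fin n) ℝ} (hJ : IsUnit J) (hσ : 0 < sigmaMin J) :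
    ‖J⁻¹‖ ≤ (sigmaMin J)⁻¹ := by
  refine l2_opNorm_le_of_mulVec_le (by positivity) fun v => ?_
  rw [inv_mul_eq_div, le_div_iff₀' hσ]
  simpa [mulVec_mulVec, mul_nonsing_inv J ((isUnit_iff_isUnit_det J).mp hJ)] using
    sigmaMin_mul_norm_le J (J⁻¹ *ᵥ v)

theorem maxNorm_nonneg (A : Matrix (Fin m) (Fin n) ℝ) : 0 ≤ maxNorm A :=
  Real.iSup_nonneg fun _ => Real.iSup_nonneg fun _ => abs_nonneg _

theorem abs_le_maxNorm (A : Matrix (Fin m) (Fin n) ℝ) (i : Fin m) (j : Fin n) :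
    |A i j| ≤ maxNorm A :=
  (le_ciSup (Finite.bddAbove_range fun j => |A i j|) j).trans
    (le_ciSup (Finite.bddAbove_range fun i => ⨆ j, |A i j|) i)

theorem l2_opNorm_le_mul_maxNorm (A : Matrix (Fin n) (Fin n) ℝ) : ‖A‖ ≤ n * maxNorm A := by
  simpa [Real.sqrt_mul_self] using
    l2_opNorm_le_sqrt_card_mul_of_abs_le (maxNorm_nonneg A) (abs_le_maxNorm A)

end

theorem stmt_6 {N : ℕ} {C : Type*} [Fintype C] (Nc : C → ℕ)
    (Pc : ∀ c : C, Matrix (Fin N) (Fin (Nc c)) ℝ)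
    (Jc Jtc : ∀ c : C, Matrix (Fin (Nc c)) (Fin (Nc c)) ℝ)
    (J Jt : Matrix (Fin N) (Fin N) ℝ) (σ : ℝ) (δ : C → ℝ)
    (hJ : J = ∑ c, Pc c * Jc c * (Pc c)ᵀ)
    (hJt : Jt = ∑ c, Pc c * Jtc c * (Pc c)ᵀ)
    (hJunit : IsUnit J) (hσ : σ = sigmaMin J) (hσpos : 0 < σ)
    (hδ : ∀ c, maxNorm (Jc c - Jtc c) ≤ δ c)
    (hsum : ∑ c, (Nc c : ℝ) * δ c < σ)
    (hP : ∀ c, opNorm (Pc c) ≤ 1) :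
    opNorm (1 - J⁻¹ * Jt) ≤ (∑ c, (Nc c : ℝ) * δ c) / σ ∧
      (∑ c, (Nc c : ℝ) * δ c) / σ < 1 := by
  have hres : 1 - J⁻¹ * Jt = J⁻¹ * (J - Jt) := by
    rw [Matrix.mul_sub, nonsing_inv_mul J ((isUnit_iff_isUnit_det J).mp hJunit)]
  have hdiff : J - Jt = ∑ c, Pc c * (Jc c - Jtc c) * (Pc c)ᵀ := by
    simp only [hJ, hJt, ← Finset.sum_sub_distrib, Matrix.mul_sub, Matrix.sub_mul]
  have hdiff_le : ‖J - Jt‖ ≤ ∑ c, (Nc c : ℝ) * δ c := by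
    rw [hdiff]
    refine (norm_sum_le _ _).trans (Finset.sum_le_sum fun c _ => ?_)
    calc ‖Pc c * (Jc c - Jtc c) * (Pc c)ᵀ‖ ≤ ‖Jc c - Jtc c‖ :=
          l2_opNorm_mul_mul_transpose_le _ _ (opNorm_eq_l2_opNorm (Pc c) ▸ hP c)
      _ ≤ Nc c * maxNorm (Jc c - Jtc c) := l2_opNorm_le_mul_maxNorm _
      _ ≤ Nc c * δ c := by gcongr; exact hδ c
  refine ⟨?_, (div_lt_one hσpos).mpr hsum⟩
  rw [opNorm_eq_l2_opNorm, hres, div_eq_inv_mul]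
  calc ‖J⁻¹ * (J - Jt)‖ ≤ ‖J⁻¹‖ * ‖J - Jt‖ := l2_opNorm_mul _ _
    _ ≤ σ⁻¹ * ∑ c, (Nc c : ℝ) * δ c := by
        subst hσ
        gcongr
        exact l2_opNorm_inv_le hJunit hσpos
end

section
/- Let G: R^N → R^N be continuously differentiable, and suppose there exist v ∈ R^N and constants ε, δ > 0 such that ‖G(v)‖₂ ≤ ε, DG(v) is invertible with ‖DG(v)^{-1}‖₂ ≤ δ, and DG is Lipschitz on B̄(v, 2δε) with Lipschitz constant M satisfying 2δ·M·(2δε) ≤ 1 (i.e., taking L(α) = Mα in the BRR hypotheses, 2δL(2δε) ≤ 1). Then there exists u ∈ B̄(v, 2δε) with G(u) = 0. -/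
/-!
The simplified Newton map `Φ x = x - DG(v)⁻¹ G(x)` has the zeros of `G` as its fixed points.
By the mean value inequality, the Lipschitz bound on `DG` makes `G - DG(v)` a
`M r`-Lipschitz map on the ball of radius `r = 2δε`, so `Φ` is a `δ M r ≤ 1/2` contraction there;
since `Φ` moves the centre by at most `δ ε = (1 - 1/2) r`, it maps the ball into itself, and the
Banach fixed point theorem provides the zero.
-/

open Metric Set Function
open scoped NNReal

theorem exists_isFixedPt_mem_closedBall_of_lipschitzOnWith {α : Type*} [MetricSpace α]
    [CompleteSpace α] {f : α → α} {x₀ : α} {r : ℝ} {K : ℝ≥0} (hK : K < 1)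
    (hf : LipschitzOnWith K f (closedBall x₀ r)) (hx₀ : dist (f x₀) x₀ ≤ (1 - K) * r) :
    ∃ y ∈ closedBall x₀ r, IsFixedPt f y := by
  have hK' : (K : ℝ) < 1 := hK
  have hr : 0 ≤ r := nonneg_of_mul_nonneg_right (dist_nonneg.trans hx₀) (by linarith)
  have hcentre : x₀ ∈ closedBall x₀ r := mem_closedBall_self hr
  have hmaps : MapsTo f (closedBall x₀ r) (closedBall x₀ r) := by
    intro x hx
    rw [mem_closedBall] at hx ⊢
    calc dist (f x) x₀ ≤ dist (f x) (f x₀) + dist (f x₀) x₀ := dist_triangle _ _ _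
      _ ≤ K * dist x x₀ + (1 - K) * r := add_le_add (hf.dist_le_mul x hx x₀ hcentre) hx₀
      _ ≤ K * r + (1 - K) * r := by gcongr
      _ = r := by ring
  obtain ⟨y, hy, hfix, -⟩ := ContractingWith.exists_fixedPoint' isClosed_closedBall.isComplete
    hmaps ⟨hK, hf.mapsToRestrict hmaps⟩ hcentre (edist_ne_top _ _)
  exact ⟨y, hy, hfix⟩

section SimplifiedNewton

variable {E F : Type*} [NormedAddCommGroup E] [NormedSpace ℝ E]
  [NormedAddCommGroup F] [NormedSpace ℝ F]

theorem norm_sub_sub_apply_le_of_norm_fderiv_sub_le {G : E → F} {v : E} {r M : ℝ}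
    {T : E →L[ℝ] F} (hM : 0 ≤ M) (hd : ∀ x ∈ closedBall v r, DifferentiableAt ℝ G x)
    (hLip : ∀ x ∈ closedBall v r, ‖fderiv ℝ G x - T‖ ≤ M * ‖x - v‖) :
    ∀ x ∈ closedBall v r, ∀ y ∈ closedBall v r,
      ‖G y - G x - T (y - x)‖ ≤ M * r * ‖y - x‖ := by
  intro x hx y hy
  refine (convex_closedBall v r).norm_image_sub_le_of_norm_fderiv_le' hd (fun z hz => ?_) hx hy
  calc ‖fderiv ℝ G z - T‖ ≤ M * ‖z - v‖ := hLip z hz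
    _ ≤ M * r := by gcongr; rwa [← dist_eq_norm, ← mem_closedBall]

theorem lipschitzOnWith_sub_symm_comp {G : E → F} {s : Set E} {e : E ≃L[ℝ] F} {C : ℝ}
    {K : ℝ≥0} (hK : ‖(e.symm : F →L[ℝ] E)‖ * C ≤ K)
    (hG : ∀ x ∈ s, ∀ y ∈ s, ‖G y - G x - e (y - x)‖ ≤ C * ‖y - x‖) :
    LipschitzOnWith K (fun x => x - e.symm (G x)) s := by
  refine LipschitzOnWith.of_dist_le_mul fun y hy x hx => ?_
  have hdiff : y - e.symm (G y) - (x - e.symm (G x)) = -e.symm (G y - G x - e (y - x)) := by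
    simp only [map_sub, ContinuousLinearEquiv.symm_apply_apply]
    abel
  rw [dist_eq_norm, dist_eq_norm, hdiff, norm_neg]
  calc ‖e.symm (G y - G x - e (y - x))‖
      ≤ ‖(e.symm : F →L[ℝ] E)‖ * ‖G y - G x - e (y - x)‖ := (e.symm : F →L[ℝ] E).le_opNorm _
    _ ≤ ‖(e.symm : F →L[ℝ] E)‖ * (C * ‖y - x‖) := by gcongr; exact hG x hx y hy
    _ = ‖(e.symm : F →L[ℝ] E)‖ * C * ‖y - x‖ := by ring
    _ ≤ K * ‖y - x‖ := by gcongr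

theorem exists_zero_mem_closedBall_of_norm_fderiv_sub_le [CompleteSpace E] {G : E → F} {v : E}
    {e : E ≃L[ℝ] F} {ε δ M : ℝ} (hM : 0 ≤ M)
    (hd : ∀ x ∈ closedBall v (2 * δ * ε), DifferentiableAt ℝ G x)
    (hGv : ‖G v‖ ≤ ε) (hinv : ‖(e.symm : F →L[ℝ] E)‖ ≤ δ)
    (hLip : ∀ x ∈ closedBall v (2 * δ * ε), ‖fderiv ℝ G x - e‖ ≤ M * ‖x - v‖)
    (hcond : 2 * δ * (M * (2 * δ * ε)) ≤ 1) :
    ∃ u ∈ closedBall v (2 * δ * ε), G u = 0 := by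
  set r := 2 * δ * ε
  have hδ : 0 ≤ δ := (norm_nonneg _).trans hinv
  have hε : 0 ≤ ε := (norm_nonneg _).trans hGv
  have hcontr : ‖(e.symm : F →L[ℝ] E)‖ * (M * r) ≤ ((1 / 2 : ℝ≥0) : ℝ) := by
    have : 0 ≤ M * r := by positivity
    push_cast
    nlinarith
  have hΦ := lipschitzOnWith_sub_symm_comp hcontr
    (norm_sub_sub_apply_le_of_norm_fderiv_sub_le hM hd hLip)
  have hcentre : dist (v - e.symm (G v)) v ≤ (1 - ((1 / 2 : ℝ≥0) : ℝ)) * r := by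
    rw [dist_eq_norm, sub_sub_cancel_left, norm_neg]
    calc ‖e.symm (G v)‖ ≤ ‖(e.symm : F →L[ℝ] E)‖ * ‖G v‖ := (e.symm : F →L[ℝ] E).le_opNorm _
      _ ≤ δ * ε := by gcongr
      _ = (1 - ((1 / 2 : ℝ≥0) : ℝ)) * r := by push_cast; ring
  obtain ⟨u, hu, hfix⟩ :=
    exists_isFixedPt_mem_closedBall_of_lipschitzOnWith (by norm_num) hΦ hcentre
  exact ⟨u, hu, e.symm.map_eq_zero_iff.mp (sub_eq_self.mp hfix)⟩

end SimplifiedNewton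

theorem stmt_17_general {N : ℕ} (G : EuclideanSpace ℝ (Fin N) → EuclideanSpace ℝ (Fin N))
    (hG : ContDiff ℝ 1 G) (v : EuclideanSpace ℝ (Fin N)) (ε δ M : ℝ)
    (hM : 0 ≤ M)
    (hGv : ‖G v‖ ≤ ε)
    (hDGv : IsUnit (fderiv ℝ G v))
    (hinv : ‖Ring.inverse (fderiv ℝ G v)‖ ≤ δ)
    (hLip : ∀ x ∈ Metric.closedBall v (2 * δ * ε), ∀ y ∈ Metric.closedBall v (2 * δ * ε),
      ‖fderiv ℝ G x - fderiv ℝ G y‖ ≤ M * ‖x - y‖)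
    (hcond : 2 * δ * (M * (2 * δ * ε)) ≤ 1) :
    ∃ u ∈ Metric.closedBall v (2 * δ * ε), G u = 0 := by
  obtain ⟨U, hU⟩ := hDGv
  set e := ContinuousLinearEquiv.unitsEquiv ℝ _ U
  have he : (e : _ →L[ℝ] _) = fderiv ℝ G v := hU
  have he_symm : (e.symm : _ →L[ℝ] _) = Ring.inverse (fderiv ℝ G v) := by
    rw [← hU, Ring.inverse_unit]
    rfl
  have hr : 0 ≤ 2 * δ * ε := by
    have := (norm_nonneg _).trans hinv
    have := (norm_nonneg _).trans hGv
    positivity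
  refine exists_zero_mem_closedBall_of_norm_fderiv_sub_le hM
    (fun x _ => (hG.differentiable one_ne_zero).differentiableAt) hGv (he_symm ▸ hinv)
    (fun x hx => ?_) hcond
  rw [he]
  exact hLip x hx v (mem_closedBall_self hr)

theorem stmt_17 {N : ℕ} (G : EuclideanSpace ℝ (Fin N) → EuclideanSpace ℝ (Fin N))
    (hG : ContDiff ℝ 1 G) (v : EuclideanSpace ℝ (Fin N)) (ε δ M : ℝ)
    (hε : 0 < ε) (hδ : 0 < δ) (hM : 0 ≤ M)
    (hGv : ‖G v‖ ≤ ε)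
    (hDGv : IsUnit (fderiv ℝ G v))
    (hinv : ‖Ring.inverse (fderiv ℝ G v)‖ ≤ δ)
    (hLip : ∀ x ∈ Metric.closedBall v (2 * δ * ε), ∀ y ∈ Metric.closedBall v (2 * δ * ε),
      ‖fderiv ℝ G x - fderiv ℝ G y‖ ≤ M * ‖x - y‖)
    (hcond : 2 * δ * (M * (2 * δ * ε)) ≤ 1) :
    ∃ u ∈ Metric.closedBall v (2 * δ * ε), G u = 0 :=
  stmt_17_general G hG v ε δ M hM hGv hDGv hinv hLip hcond
end
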